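/- arXiv:1704.07937 — 6 statements merged into one kernel-verified Lean document; each statement's English description precedes it below -/
import Mathlib

section
/- Let G be a group acting by homeomorphisms on topological spaces A and B, and let G act on A × B by the diagonal action. Let R ⊆ A × B be a G-invariant subset, equipped with the subspace topology, such that the projections pr_A : R → A and pr_B : R → B are both proper maps and surjective. Then the following are equivalent: (a) G acts properly discontinuously and cocompactly on A; (b) G acts properly discontinuously and cocompactly on R; (c) G acts properly discontinuously and cocompactly on B. -/
open Pointwise

private lemma auxA {G A B : Type*} [Group G] [TopologicalSpace A] [TopologicalSpace B]
    [MulAction G A] [MulAction G B]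
    (R : Set (A × B))
    (hInv : ∀ (g : G), ∀ r ∈ R, g • r ∈ R)
    (hprA : ∀ K : Set A, IsCompact K → IsCompact {r : A × B | r ∈ R ∧ r.1 ∈ K})
    (hsurjA : ∀ a : A, ∃ b : B, (a, b) ∈ R) :
    ((∀ K L : Set A, IsCompact K → IsCompact L → {g : G | (g • K) ∩ L ≠ ∅}.Finite) ∧
      (∃ K : Set A, IsCompact K ∧ ⋃ g : G, g • K = Set.univ)) ↔
    ((∀ K L : Set (A × B), K ⊆ R → L ⊆ R → IsCompact K → IsCompact L →
        {g : G | (g • K) ∩ L ≠ ∅}.Finite) ∧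
      (∃ K : Set (A × B), K ⊆ R ∧ IsCompact K ∧ ⋃ g : G, g • K = R)) := by
  constructor
  · rintro ⟨hpd, K₀, hK₀c, hK₀cov⟩
    constructor
    · intro K L _ _ hK hL
      apply (hpd (Prod.fst '' K) (Prod.fst '' L) (hK.image continuous_fst)
        (hL.image continuous_fst)).subset
      intro g hg
      simp only [Set.mem_setOf_eq, ← Set.nonempty_iff_ne_empty] at hg ⊢
      obtain ⟨x, hx1, hx2⟩ := hg
      obtain ⟨k, hk, rfl⟩ := hx1
      exact ⟨g • k.1, ⟨k.1, ⟨k, hk, rfl⟩, rfl⟩, ⟨g • k, hx2, rfl⟩⟩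
    · refine ⟨{r | r ∈ R ∧ r.1 ∈ K₀}, fun r hr => hr.1, hprA K₀ hK₀c, ?_⟩
      ext r
      simp only [Set.mem_iUnion]
      constructor
      · rintro ⟨g, x, ⟨hxR, _⟩, rfl⟩; exact hInv g x hxR
      · intro hr
        have h1 : r.1 ∈ ⋃ g : G, g • K₀ := by rw [hK₀cov]; trivial
        obtain ⟨g, hg⟩ := Set.mem_iUnion.1 h1
        obtain ⟨a, ha, hga⟩ := hg
        refine ⟨g, g⁻¹ • r, ⟨hInv g⁻¹ r hr, ?_⟩, smul_inv_smul g r⟩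
        have : (g⁻¹ • r).1 = a := by
          show g⁻¹ • r.1 = a
          rw [← hga, inv_smul_smul]
        rw [this]; exact ha
  · rintro ⟨hpd, K₀, hK₀R, hK₀c, hK₀cov⟩
    constructor
    · intro K L hK hL
      apply (hpd {r | r ∈ R ∧ r.1 ∈ K} {r | r ∈ R ∧ r.1 ∈ L} (fun r hr => hr.1)
        (fun r hr => hr.1) (hprA K hK) (hprA L hL)).subset
      intro g hg
      simp only [Set.mem_setOf_eq, ← Set.nonempty_iff_ne_empty] at hg ⊢
      obtain ⟨a, ⟨a', ha'K, rfl⟩, haL⟩ := hg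
      obtain ⟨b, hb⟩ := hsurjA a'
      exact ⟨g • (a', b), ⟨(a', b), ⟨hb, ha'K⟩, rfl⟩, ⟨hInv g _ hb, haL⟩⟩
    · refine ⟨Prod.fst '' K₀, hK₀c.image continuous_fst, ?_⟩
      ext a
      simp only [Set.mem_iUnion, Set.mem_univ, iff_true]
      obtain ⟨b, hb⟩ := hsurjA a
      have h1 : (a, b) ∈ ⋃ g : G, g • K₀ := hK₀cov ▸ hb
      obtain ⟨g, hg⟩ := Set.mem_iUnion.1 h1
      obtain ⟨r, hr, hgr⟩ := hg
      exact ⟨g, r.1, ⟨r, hr, rfl⟩, congrArg Prod.fst hgr⟩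

private lemma auxB {G A B : Type*} [Group G] [TopologicalSpace A] [TopologicalSpace B]
    [MulAction G A] [MulAction G B]
    (R : Set (A × B))
    (hInv : ∀ (g : G), ∀ r ∈ R, g • r ∈ R)
    (hprB : ∀ K : Set B, IsCompact K → IsCompact {r : A × B | r ∈ R ∧ r.2 ∈ K})
    (hsurjB : ∀ b : B, ∃ a : A, (a, b) ∈ R) :
    ((∀ K L : Set B, IsCompact K → IsCompact L → {g : G | (g • K) ∩ L ≠ ∅}.Finite) ∧
      (∃ K : Set B, IsCompact K ∧ ⋃ g : G, g • K = Set.univ)) ↔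
    ((∀ K L : Set (A × B), K ⊆ R → L ⊆ R → IsCompact K → IsCompact L →
        {g : G | (g • K) ∩ L ≠ ∅}.Finite) ∧
      (∃ K : Set (A × B), K ⊆ R ∧ IsCompact K ∧ ⋃ g : G, g • K = R)) := by
  constructor
  · rintro ⟨hpd, K₀, hK₀c, hK₀cov⟩
    constructor
    · intro K L _ _ hK hL
      apply (hpd (Prod.snd '' K) (Prod.snd '' L) (hK.image continuous_snd)
        (hL.image continuous_snd)).subset
      intro g hg
      simp only [Set.mem_setOf_eq, ← Set.nonempty_iff_ne_empty] at hg ⊢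
      obtain ⟨x, hx1, hx2⟩ := hg
      obtain ⟨k, hk, rfl⟩ := hx1
      exact ⟨g • k.2, ⟨k.2, ⟨k, hk, rfl⟩, rfl⟩, ⟨g • k, hx2, rfl⟩⟩
    · refine ⟨{r | r ∈ R ∧ r.2 ∈ K₀}, fun r hr => hr.1, hprB K₀ hK₀c, ?_⟩
      ext r
      simp only [Set.mem_iUnion]
      constructor
      · rintro ⟨g, x, ⟨hxR, _⟩, rfl⟩; exact hInv g x hxR
      · intro hr
        have h1 : r.2 ∈ ⋃ g : G, g • K₀ := by rw [hK₀cov]; trivial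
        obtain ⟨g, hg⟩ := Set.mem_iUnion.1 h1
        obtain ⟨a, ha, hga⟩ := hg
        refine ⟨g, g⁻¹ • r, ⟨hInv g⁻¹ r hr, ?_⟩, smul_inv_smul g r⟩
        have : (g⁻¹ • r).2 = a := by
          show g⁻¹ • r.2 = a
          rw [← hga, inv_smul_smul]
        rw [this]; exact ha
  · rintro ⟨hpd, K₀, hK₀R, hK₀c, hK₀cov⟩
    constructor
    · intro K L hK hL
      apply (hpd {r | r ∈ R ∧ r.2 ∈ K} {r | r ∈ R ∧ r.2 ∈ L} (fun r hr => hr.1)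
        (fun r hr => hr.1) (hprB K hK) (hprB L hL)).subset
      intro g hg
      simp only [Set.mem_setOf_eq, ← Set.nonempty_iff_ne_empty] at hg ⊢
      obtain ⟨b, ⟨b', hb'K, rfl⟩, hbL⟩ := hg
      obtain ⟨a, ha⟩ := hsurjB b'
      exact ⟨g • (a, b'), ⟨(a, b'), ⟨ha, hb'K⟩, rfl⟩, ⟨hInv g _ ha, hbL⟩⟩
    · refine ⟨Prod.snd '' K₀, hK₀c.image continuous_snd, ?_⟩
      ext b
      simp only [Set.mem_iUnion, Set.mem_univ, iff_true]
      obtain ⟨a, ha⟩ := hsurjB b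
      have h1 : (a, b) ∈ ⋃ g : G, g • K₀ := hK₀cov ▸ ha
      obtain ⟨g, hg⟩ := Set.mem_iUnion.1 h1
      obtain ⟨r, hr, hgr⟩ := hg
      exact ⟨g, r.2, ⟨r, hr, rfl⟩, congrArg Prod.snd hgr⟩

/-- Lemma 3.1 (Bowditch's key observation): for a `G`-invariant relation
`R ⊆ A × B` (with the subspace topology) whose projections to the factors are
proper and surjective, proper discontinuity together with cocompactness of the
`G`-action on `A`, on `R`, and on `B` are all equivalent. -/
theorem stmt0 {G A B : Type*} [Group G] [TopologicalSpace A] [TopologicalSpace B]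
    [MulAction G A] [MulAction G B]
    (hGA : ∀ g : G, Continuous fun a : A => g • a)
    (hGB : ∀ g : G, Continuous fun b : B => g • b)
    (R : Set (A × B))
    (hInv : ∀ (g : G), ∀ r ∈ R, g • r ∈ R)
    (hprA : ∀ K : Set A, IsCompact K → IsCompact {r : A × B | r ∈ R ∧ r.1 ∈ K})
    (hprB : ∀ K : Set B, IsCompact K → IsCompact {r : A × B | r ∈ R ∧ r.2 ∈ K})
    (hsurjA : ∀ a : A, ∃ b : B, (a, b) ∈ R)
    (hsurjB : ∀ b : B, ∃ a : A, (a, b) ∈ R) :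
    List.TFAE [
      (∀ K L : Set A, IsCompact K → IsCompact L →
          {g : G | (g • K) ∩ L ≠ ∅}.Finite) ∧
        (∃ K : Set A, IsCompact K ∧ ⋃ g : G, g • K = Set.univ),
      (∀ K L : Set (A × B), K ⊆ R → L ⊆ R → IsCompact K → IsCompact L →
          {g : G | (g • K) ∩ L ≠ ∅}.Finite) ∧
        (∃ K : Set (A × B), K ⊆ R ∧ IsCompact K ∧ ⋃ g : G, g • K = R),
      (∀ K L : Set B, IsCompact K → IsCompact L →
          {g : G | (g • K) ∩ L ≠ ∅}.Finite) ∧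
        (∃ K : Set B, IsCompact K ∧ ⋃ g : G, g • K = Set.univ)
    ] := by
  tfae_have 1 ↔ 2 := auxA R hInv hprA hsurjA
  tfae_have 3 ↔ 2 := auxB R hInv hprB hsurjB
  tfae_finish
end

section
/- Let (Y, ρ) be a separable metric space, let (X, d) be a proper metric space, let y₀ ∈ Y, and let K be a compact subset of X. Then any sequence of isometric embeddings cₙ : Y → X with cₙ(y₀) ∈ K for all n has a subsequence that converges pointwise to an isometric embedding c : Y → X; that is, there exist a strictly monotone function φ : ℕ → ℕ and an isometric embedding c : Y → X such that for every y ∈ Y the sequence c_{φ(n)}(y) converges to c(y). -/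
/-- Lemma 3.3 (diagonal lemma): a sequence of isometric embeddings of a
separable metric space `Y` into a proper metric space `X`, whose values at a
basepoint `y₀` lie in a compact set `K`, has a subsequence converging pointwise
to an isometric embedding. -/
theorem stmt1 {Y X : Type*} [MetricSpace Y] [MetricSpace X]
    [TopologicalSpace.SeparableSpace Y] [ProperSpace X]
    (y₀ : Y) (K : Set X) (hK : IsCompact K)
    (c : ℕ → Y → X) (hiso : ∀ n, Isometry (c n)) (hbase : ∀ n, c n y₀ ∈ K) :
    ∃ φ : ℕ → ℕ, StrictMono φ ∧ ∃ f : Y → X, Isometry f ∧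
      ∀ y : Y, Filter.Tendsto (fun n => c (φ n) y) Filter.atTop (nhds (f y)) := by
  haveI : Nonempty Y := ⟨y₀⟩
  set u : ℕ → Y := TopologicalSpace.denseSeq Y
  have hu : DenseRange u := TopologicalSpace.denseRange_denseSeq Y
  -- compact set containing the values at each point
  set C : Y → Set X := fun y => Metric.cthickening (dist y y₀) K with hC
  have hmem : ∀ n y, c n y ∈ C y := fun n y =>
    Metric.mem_cthickening_of_dist_le _ _ _ _ (hbase n) (by rw [(hiso n).dist_eq])
  have hCcomp : ∀ y, IsCompact (C y) := fun y => hK.cthickening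
  haveI : ∀ k, CompactSpace (C (u k)) := fun k => isCompact_iff_compactSpace.mp (hCcomp (u k))
  -- extract subsequence converging on the dense sequence, via the compact metrizable product
  obtain ⟨g, φ, hφ, hg⟩ := SeqCompactSpace.tendsto_subseq
    (X := ∀ k : ℕ, C (u k)) (fun n k => ⟨c n (u k), hmem n (u k)⟩)
  have hgk : ∀ k, Filter.Tendsto (fun n => c (φ n) (u k)) Filter.atTop (nhds (g k : X)) := by
    intro k
    have := (continuous_apply k).continuousAt.tendsto.comp hg
    exact (continuous_subtype_val.continuousAt.tendsto.comp this :)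
  -- Cauchy at every point
  have hcauchy : ∀ y : Y, CauchySeq (fun n => c (φ n) y) := by
    intro y
    rw [Metric.cauchySeq_iff]
    intro ε hε
    obtain ⟨k, hk⟩ := hu.exists_dist_lt y (by positivity : (0:ℝ) < ε/4)
    obtain ⟨N, hN⟩ := (Metric.cauchySeq_iff.mp (hgk k).cauchySeq) (ε/2) (by positivity)
    refine ⟨N, fun m hm n hn => ?_⟩
    calc dist (c (φ m) y) (c (φ n) y)
        ≤ dist (c (φ m) y) (c (φ m) (u k)) + dist (c (φ m) (u k)) (c (φ n) (u k))
            + dist (c (φ n) (u k)) (c (φ n) y) := dist_triangle4 _ _ _ _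
      _ < ε/4 + ε/2 + ε/4 := by
          rw [(hiso (φ m)).dist_eq, (hiso (φ n)).dist_eq, dist_comm (u k) y]
          exact add_lt_add (add_lt_add hk (hN m hm n hn)) hk
      _ = ε := by ring
  choose f hf using fun y => cauchySeq_tendsto_of_complete (hcauchy y)
  refine ⟨φ, hφ, f, Isometry.of_dist_eq fun y y' => ?_, hf⟩
  have h1 : Filter.Tendsto (fun n => dist (c (φ n) y) (c (φ n) y')) Filter.atTop
      (nhds (dist (f y) (f y'))) := Filter.Tendsto.dist (hf y) (hf y')
  have h2 : (fun n => dist (c (φ n) y) (c (φ n) y')) = fun _ => dist y y' := by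
    funext n; exact (hiso (φ n)).dist_eq y y'
  rw [h2] at h1
  exact tendsto_nhds_unique h1 tendsto_const_nhds
end

section
/- Let G be a group acting by homeomorphisms, properly discontinuously and cocompactly, on a locally compact, locally connected Hausdorff space Y. Then: (i) the connected components of Y lie in only finitely many G-orbits, i.e. there are finitely many components C₁, …, C_k such that every connected component of Y equals g • C_i for some g ∈ G and some i; and (ii) every connected component C of Y is G-periodic, i.e. the stabilizer Stab_G(C) = {g ∈ G | g • C = C} acts cocompactly on C. -/
open Pointwise

private theorem smul_cc {G Y : Type*} [Group G] [TopologicalSpace Y] [MulAction G Y]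
    (hcont : ∀ g : G, Continuous fun y : Y => g • y) (g : G) (x : Y) :
    g • connectedComponent x = connectedComponent (g • x) := by
  apply subset_antisymm
  · exact (hcont g).image_connectedComponent_subset x
  · have h := (hcont g⁻¹).image_connectedComponent_subset (g • x)
    rw [inv_smul_smul] at h
    intro z hz
    have : g⁻¹ • z ∈ connectedComponent x := h ⟨z, hz, rfl⟩
    exact ⟨g⁻¹ • z, this, smul_inv_smul g z⟩

/-- Lemma 4.2: if a group `G` acts by homeomorphisms, properly discontinuously
and cocompactly, on a locally compact, locally connected Hausdorff space `Y`,
then (i) the connected components of `Y` lie in finitely many `G`-orbits, and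
(ii) each connected component is `G`-periodic, i.e. its stabilizer acts
cocompactly on it. -/
theorem stmt3 {G Y : Type*} [Group G] [TopologicalSpace Y] [MulAction G Y]
    [LocallyCompactSpace Y] [LocallyConnectedSpace Y] [T2Space Y]
    (hcont : ∀ g : G, Continuous fun y : Y => g • y)
    (hpd : ∀ K L : Set Y, IsCompact K → IsCompact L →
      {g : G | (g • K) ∩ L ≠ ∅}.Finite)
    (hcc : ∃ K : Set Y, IsCompact K ∧ ⋃ g : G, g • K = Set.univ) :
    (∃ S : Set (Set Y), S.Finite ∧ (∀ C ∈ S, ∃ y : Y, C = connectedComponent y) ∧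
      ∀ y : Y, ∃ C ∈ S, ∃ g : G, connectedComponent y = g • C) ∧
    (∀ y : Y, ∃ K : Set Y, K ⊆ connectedComponent y ∧ IsCompact K ∧
      ⋃ g ∈ {g : G | g • connectedComponent y = connectedComponent y}, g • K
        = connectedComponent y) := by
  obtain ⟨K, hK, hKcov⟩ := hcc
  -- each point of K has an open connected neighborhood
  have hU : ∀ x : Y, ∃ U : Set Y, IsOpen U ∧ x ∈ U ∧ IsConnected U := by
    intro x
    obtain ⟨V, -, hVopen, hxV, hVconn⟩ :=
      locallyConnectedSpace_iff_subsets_isOpen_isConnected.mp ‹_› x Set.univ Filter.univ_mem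
    exact ⟨V, hVopen, hxV, hVconn⟩
  choose U hUopen hUmem hUconn using hU
  -- finite subcover of K
  obtain ⟨t, ht, htcov⟩ := hK.elim_nhds_subcover U (fun x _ => (hUopen x).mem_nhds (hUmem x))
  -- key fact: every point of K has the same component as some x ∈ t
  have hkey : ∀ k ∈ K, ∃ x ∈ t, connectedComponent k = connectedComponent x := by
    intro k hk
    obtain ⟨x, hxt, hkU⟩ := Set.mem_iUnion₂.mp (htcov hk)
    refine ⟨x, hxt, ?_⟩
    rw [connectedComponent_eq (show k ∈ connectedComponent x from
      (hUconn x).isPreconnected.subset_connectedComponent (hUmem x) hkU)]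
  have hcover : ∀ z : Y, ∃ g : G, ∃ k ∈ K, g • k = z := by
    intro z
    have : z ∈ ⋃ g : G, g • K := hKcov ▸ Set.mem_univ z
    obtain ⟨_, ⟨g, rfl⟩, k, hk, hgz⟩ := this
    exact ⟨g, k, hk, hgz⟩
  constructor
  · refine ⟨(fun x => connectedComponent x) '' t, (t.finite_toSet.image _), ?_, ?_⟩
    · rintro C ⟨x, _, rfl⟩; exact ⟨x, rfl⟩
    · intro y
      obtain ⟨g, k, hk, hgk⟩ := hcover y
      obtain ⟨x, hxt, hck⟩ := hkey k hk
      refine ⟨connectedComponent x, ⟨x, hxt, rfl⟩, g, ?_⟩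
      rw [smul_cc hcont]
      apply connectedComponent_eq
      rw [← hgk, ← smul_cc hcont]
      have hkx : x ∈ connectedComponent k := by
        rw [hck]; exact mem_connectedComponent
      exact Set.smul_mem_smul_set hkx
  · intro y
    set C := connectedComponent y with hC
    -- T : elements of t whose component is in the orbit of C
    classical
    set T := t.filter (fun x => ∃ g : G, g • connectedComponent x = C) with hT
    have hgx : ∀ x ∈ T, ∃ g : G, g • connectedComponent x = C := by
      intro x hx; exact (Finset.mem_filter.mp hx).2
    choose gx hgxC using hgx
    refine ⟨⋃ x ∈ T.attach, gx x x.2 • (K ∩ connectedComponent x.1), ?_, ?_, ?_⟩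
    · -- subset of C
      refine Set.iUnion₂_subset fun x _ => ?_
      calc gx x x.2 • (K ∩ connectedComponent x.1)
          ⊆ gx x x.2 • connectedComponent x.1 :=
            Set.smul_set_mono Set.inter_subset_right
        _ = C := hgxC x x.2
    · -- compact
      apply Set.Finite.isCompact_biUnion T.attach.finite_toSet
      intro x _
      have hc := (hK.inter_right (isClosed_connectedComponent (x := x.1))).image
        (hcont (gx x x.2))
      rwa [Set.image_smul] at hc
    · -- covers C under the stabilizer
      apply subset_antisymm
      · refine Set.iUnion₂_subset fun h hh => ?_
        simp only [Set.smul_set_iUnion]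
        refine Set.iUnion₂_subset fun x _ => ?_
        calc h • (gx x x.2 • (K ∩ connectedComponent x.1))
            ⊆ h • (gx x x.2 • connectedComponent x.1) :=
              Set.smul_set_mono (Set.smul_set_mono Set.inter_subset_right)
          _ = h • C := by rw [hgxC x x.2]
          _ = C := hh
      · intro z hz
        obtain ⟨g, k, hk, hgk⟩ := hcover z
        obtain ⟨x, hxt, hck⟩ := hkey k hk
        have hgC : g • connectedComponent x = C := by
          rw [← hck, smul_cc hcont, hgk, hC, connectedComponent_eq hz]
        have hxT : x ∈ T := Finset.mem_filter.mpr ⟨hxt, g, hgC⟩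
        set x' : {a // a ∈ T} := ⟨x, hxT⟩ with hx'
        set h := g * (gx x' x'.2)⁻¹ with hh
        have hhstab : h • C = C := by
          calc h • C = g • (gx x' x'.2)⁻¹ • C := by rw [hh, mul_smul]
            _ = g • (gx x' x'.2)⁻¹ • (gx x' x'.2 • connectedComponent x) := by
                rw [hgxC x' x'.2]
            _ = g • connectedComponent x := by rw [inv_smul_smul]
            _ = C := hgC
        have hkmem : k ∈ K ∩ connectedComponent x := ⟨hk, hck ▸ (mem_connectedComponent : k ∈ connectedComponent k)⟩
        have hz1 : z ∈ h • (gx x' x'.2 • (K ∩ connectedComponent x)) := by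
          refine ⟨gx x' x'.2 • k, ⟨k, hkmem, rfl⟩, ?_⟩
          show h • gx x' x'.2 • k = z
          rw [smul_smul, hh, inv_mul_cancel_right, hgk]
        exact Set.mem_biUnion hhstab
          (Set.smul_set_mono (Set.subset_iUnion₂ (s := fun (a : {a // a ∈ T}) _ =>
            gx a a.2 • (K ∩ connectedComponent a.1)) x' (Finset.mem_attach T x')) hz1)
end

section
/- Let G be a group acting by homeomorphisms, properly discontinuously and cocompactly, on a locally compact, connected, locally connected, separable metrizable space C, and let Q = C/G be the orbit space with the quotient topology. Then Q is a Peano continuum: Q is compact, connected, locally connected, and metrizable. -/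
/-!
Connectedness and local connectedness pass to every quotient, and compactness passes to the
orbit space because it is the image of a compact set meeting every orbit. The quotient map is
open, so the orbit space is also locally compact and second countable; proper discontinuity
makes it Hausdorff, hence regular, and Urysohn's metrization theorem applies.
-/

open Pointwise

namespace MulAction

variable {G C : Type*} [Group G] [MulAction G C]

theorem image_quotientMk_eq_univ_of_iUnion_smul_eq_univ {K : Set C}
    (hK : ⋃ g : G, g • K = Set.univ) :
    Quotient.mk (orbitRel G C) '' K = Set.univ := by
  refine Set.eq_univ_of_forall fun y ↦ ?_
  obtain ⟨x, rfl⟩ := Quotient.mk_surjective y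
  obtain ⟨g, k, hk, rfl⟩ := Set.mem_iUnion.1 (hK ▸ Set.mem_univ x)
  exact ⟨k, hk, Quotient.sound ⟨g⁻¹, inv_smul_smul g k⟩⟩

variable [TopologicalSpace C]

theorem compactSpace_quotient_of_isCompact_of_iUnion_smul_eq_univ {K : Set C}
    (hKc : IsCompact K) (hK : ⋃ g : G, g • K = Set.univ) :
    CompactSpace (Quotient (orbitRel G C)) where
  isCompact_univ := image_quotientMk_eq_univ_of_iUnion_smul_eq_univ hK ▸
    hKc.image continuous_quotient_mk'

theorem locallyConnectedSpace_quotient [LocallyConnectedSpace C] :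
    LocallyConnectedSpace (Quotient (orbitRel G C)) :=
  isQuotientMap_quotient_mk'.isCoinducing.locallyConnectedSpace

theorem metrizableSpace_quotient_of_properlyDiscontinuousSMul [ContinuousConstSMul G C]
    [ProperlyDiscontinuousSMul G C] [LocallyCompactSpace C] [T2Space C]
    [SecondCountableTopology C] :
    TopologicalSpace.MetrizableSpace (Quotient (orbitRel G C)) :=
  have : SecondCountableTopology (Quotient (orbitRel G C)) :=
    ContinuousConstSMul.secondCountableTopology
  have : LocallyCompactSpace (Quotient (orbitRel G C)) :=
    isOpenQuotientMap_quotientMk.locallyCompactSpace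
  TopologicalSpace.metrizableSpace_of_t3_secondCountable _

end MulAction

/-- Theorem 5.8: the orbit space of a properly discontinuous, cocompact action
by homeomorphisms on a locally compact, connected, locally connected, separable
metrizable space is a Peano continuum. -/
theorem stmt9 {G C : Type*} [Group G] [TopologicalSpace C] [MulAction G C]
    [LocallyCompactSpace C] [ConnectedSpace C] [LocallyConnectedSpace C]
    [TopologicalSpace.SeparableSpace C] [TopologicalSpace.MetrizableSpace C]
    (hcont : ∀ g : G, Continuous fun c : C => g • c)
    (hpd : ∀ K L : Set C, IsCompact K → IsCompact L →
      {g : G | (g • K) ∩ L ≠ ∅}.Finite)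
    (hcc : ∃ K : Set C, IsCompact K ∧ ⋃ g : G, g • K = Set.univ) :
    CompactSpace (Quotient (MulAction.orbitRel G C)) ∧
      ConnectedSpace (Quotient (MulAction.orbitRel G C)) ∧
      LocallyConnectedSpace (Quotient (MulAction.orbitRel G C)) ∧
      TopologicalSpace.MetrizableSpace (Quotient (MulAction.orbitRel G C)) := by
  have : ContinuousConstSMul G C := ⟨hcont⟩
  have : ProperlyDiscontinuousSMul G C :=
    ⟨fun hK hL ↦ by simpa only [Set.image_smul, Set.nonempty_iff_ne_empty] using hpd _ _ hK hL⟩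
  have : SecondCountableTopology C := by
    let := TopologicalSpace.metrizableSpaceMetric C
    exact UniformSpace.secondCountable_of_separable C
  obtain ⟨K, hKc, hKu⟩ := hcc
  exact ⟨MulAction.compactSpace_quotient_of_isCompact_of_iUnion_smul_eq_univ hKc hKu,
    inferInstance, MulAction.locallyConnectedSpace_quotient,
    MulAction.metrizableSpace_quotient_of_properlyDiscontinuousSMul⟩
end

section
/- Let G be a torsion-free group acting by homeomorphisms, properly discontinuously and cocompactly, on a locally compact, connected, locally connected, separable metrizable space C. Then there exists a G-invariant metric d on C that induces the topology of C, i.e. d(g • x, g • y) = d(x, y) for all g ∈ G and x, y ∈ C, and the metric topology of d coincides with the topology of C. -/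
/-!
Pick a compact `K` whose translates cover `C`, a compactly supported Urysohn function `ψ` equal
to `1` on `K`, and an isometric embedding `e` of `C` into `ℓ^∞(ℕ, ℝ)`. Then `Φ = (ψ, ψ • e)` is
compactly supported and recovers the topology near every point of `K`. The map
`x ↦ (Φ (g • x))_g` into `ℓ^∞(G, ℝ × ℓ^∞(ℕ, ℝ))` is continuous because, by proper
discontinuity, only finitely many coordinates are nonzero near any point; it is an embedding
because every orbit meets `K`; and `G` acts on it by reindexing coordinates. The pulled-back sup
metric is therefore `G`-invariant and induces the topology of `C`.
-/

open Filter Set Topology Pointwise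
open scoped ENNReal lp CompactlySupported

section OrbitProfile

variable (G : Type*) {C E : Type*} [Group G] [TopologicalSpace C] [MulAction G C]
  [NormedAddCommGroup E]

def orbitProfile (Φ : C_c(C, E)) (x : C) : ℓ^∞(G, E) :=
  ⟨fun g => Φ (g • x), memℓp_infty <|
    (Φ.continuous.norm.bddAbove_range_of_hasCompactSupport Φ.hasCompactSupport.norm).mono <|
      range_subset_iff.2 fun g => mem_range_self (g • x)⟩

variable {G}

@[simp]
lemma orbitProfile_apply (Φ : C_c(C, E)) (x : C) (g : G) :
    orbitProfile G Φ x g = Φ (g • x) :=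
  rfl

lemma dist_orbitProfile_smul (Φ : C_c(C, E)) (g : G) (x y : C) :
    dist (orbitProfile G Φ (g • x)) (orbitProfile G Φ (g • y)) =
      dist (orbitProfile G Φ x) (orbitProfile G Φ y) := by
  simp only [dist_eq_norm, lp.norm_eq_ciSup, lp.coeFn_sub, Pi.sub_apply, orbitProfile_apply,
    ← mul_smul]
  exact (Equiv.mulRight g).iSup_comp (g := fun h => ‖Φ (h • x) - Φ (h • y)‖)

variable [ContinuousConstSMul G C] [ProperlyDiscontinuousSMul G C] [LocallyCompactSpace C]

lemma continuous_orbitProfile (Φ : C_c(C, E)) : Continuous (orbitProfile G Φ) := by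
  refine continuous_iff_continuousAt.2 fun x => Metric.tendsto_nhds.2 fun ε hε => ?_
  obtain ⟨Q, hQ, hQx⟩ := exists_compact_mem_nhds x
  set S := {g : G | ((g • ·) '' Q ∩ tsupport Φ).Nonempty}
  have hS : S.Finite := finite_disjoint_inter_image hQ Φ.hasCompactSupport
  have hnear : ∀ᶠ y in 𝓝 x, ∀ g ∈ S, dist (Φ (g • y)) (Φ (g • x)) < ε / 2 :=
    hS.eventually_all.2 fun g _ => ((Φ.continuous.comp (continuous_const_smul g)).tendsto x)
      |>.eventually (Metric.ball_mem_nhds _ (by positivity))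
  filter_upwards [hQx, hnear] with y hyQ hy
  rw [dist_eq_norm]
  refine (lp.norm_le_of_forall_le (by positivity) fun g => ?_).trans_lt (half_lt_self hε)
  rw [lp.coeFn_sub, Pi.sub_apply, orbitProfile_apply, orbitProfile_apply, ← dist_eq_norm]
  by_cases hg : g ∈ S
  · exact (hy g hg).le
  · have hvanish : ∀ z ∈ Q, Φ (g • z) = 0 := fun z hz =>
      image_eq_zero_of_notMem_tsupport fun h => hg ⟨g • z, mem_image_of_mem _ hz, h⟩
    rw [hvanish y hyQ, hvanish x (mem_of_mem_nhds hQx), dist_self]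
    positivity

lemma isEmbedding_orbitProfile [T0Space C] (Φ : C_c(C, E)) {K : Set C}
    (hK : ⋃ g : G, g • K = univ) (hΦK : ∀ x ∈ K, comap Φ (𝓝 (Φ x)) ≤ 𝓝 x) :
    IsEmbedding (orbitProfile G Φ) := by
  refine IsInducing.isEmbedding <| isInducing_iff_nhds.2 fun x =>
    le_antisymm ((continuous_orbitProfile Φ).tendsto x).le_comap ?_
  obtain ⟨g, hgx⟩ : ∃ g : G, g • x ∈ K := by
    obtain ⟨g, hg⟩ := mem_iUnion.1 (hK.symm ▸ mem_univ x)
    exact ⟨g⁻¹, mem_smul_set_iff_inv_smul_mem.1 hg⟩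
  have hcoord : Tendsto (fun y => orbitProfile G Φ y g) (comap (orbitProfile G Φ)
      (𝓝 (orbitProfile G Φ x))) (𝓝 (orbitProfile G Φ x g)) :=
    ((lp.lipschitzWith_one_eval ∞ g).continuous.tendsto _).comp tendsto_comap
  calc comap (orbitProfile G Φ) (𝓝 (orbitProfile G Φ x))
      _ ≤ comap (g • ·) (comap Φ (𝓝 (Φ (g • x)))) := by
        rw [comap_comap]
        exact hcoord.le_comap
      _ ≤ comap (g • ·) (𝓝 (g • x)) := comap_mono (hΦK _ hgx)
      _ = 𝓝 x := ((Homeomorph.smul g).nhds_eq_comap x).symm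

end OrbitProfile

lemma comap_nhds_prodMk_smul_le {X 𝕜 E : Type*} [TopologicalSpace X] [NormedField 𝕜]
    [SeminormedAddCommGroup E] [NormedSpace 𝕜 E] {ψ : X → 𝕜} {e : X → E} (he : IsInducing e)
    {x : X} (hx : ψ x ≠ 0) :
    comap (fun y => (ψ y, ψ y • e y)) (𝓝 (ψ x, ψ x • e x)) ≤ 𝓝 x := by
  rw [he.nhds_eq_comap x, ← tendsto_iff_comap]
  have hdiv : Tendsto (fun p : 𝕜 × E => p.1⁻¹ • p.2) (𝓝 (ψ x, ψ x • e x)) (𝓝 (e x)) := by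
    have hcont : ContinuousAt (fun p : 𝕜 × E => p.1⁻¹ • p.2) (ψ x, ψ x • e x) := by
      fun_prop (disch := exact hx)
    simpa [inv_smul_smul₀ hx] using hcont.tendsto
  refine (hdiv.comp tendsto_comap).congr' ?_
  filter_upwards [tendsto_comap.eventually ((continuous_fst.tendsto _).eventually_ne hx)]
    with y hy
  exact inv_smul_smul₀ hy _

theorem stmt10_general {G C : Type*} [Group G] [tC : TopologicalSpace C] [MulAction G C]
    [LocallyCompactSpace C]
    [TopologicalSpace.SeparableSpace C] [TopologicalSpace.MetrizableSpace C]
    (hcont : ∀ g : G, Continuous fun c : C => g • c)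
    (hpd : ∀ K L : Set C, IsCompact K → IsCompact L →
      {g : G | (g • K) ∩ L ≠ ∅}.Finite)
    (hcc : ∃ K : Set C, IsCompact K ∧ ⋃ g : G, g • K = Set.univ) :
    ∃ m : MetricSpace C,
      m.toUniformSpace.toTopologicalSpace = tC ∧
      ∀ (g : G) (x y : C), m.dist (g • x) (g • y) = m.dist x y := by
  let := TopologicalSpace.metrizableSpaceMetric C
  have : ContinuousConstSMul G C := ⟨hcont⟩
  have : ProperlyDiscontinuousSMul G C :=
    ⟨fun hK hL => (hpd _ _ hK hL).subset fun _ h => nonempty_iff_ne_empty.1 h⟩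
  obtain ⟨K, hK, hKcover⟩ := hcc
  obtain ⟨ψ, hψK, -, hψs, -⟩ :=
    exists_continuous_one_zero_of_isCompact hK isClosed_empty (disjoint_empty K)
  have he := kuratowskiEmbedding.isometry C
  let Φ : C_c(C, ℝ × ℓ^∞(ℕ, ℝ)) :=
    ⟨⟨fun y => (ψ y, ψ y • kuratowskiEmbedding C y),
      ψ.continuous.prodMk (ψ.continuous.smul he.continuous)⟩,
      hψs.mono fun y hy h0 => hy (by simp [h0])⟩
  have hF := isEmbedding_orbitProfile (G := G) Φ hKcover fun x hx =>
    comap_nhds_prodMk_smul_le he.isEmbedding.isInducing (by simp [hψK hx])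
  exact ⟨hF.comapMetricSpace _, rfl, dist_orbitProfile_smul Φ⟩

/-- Proposition 5.9: a torsion-free group acting by homeomorphisms, properly
discontinuously and cocompactly, on a locally compact, connected, locally
connected, separable metrizable space `C` admits an equivariant (invariant)
metric on `C` inducing its topology. -/
theorem stmt10 {G C : Type*} [Group G] [tC : TopologicalSpace C] [MulAction G C]
    [LocallyCompactSpace C] [ConnectedSpace C] [LocallyConnectedSpace C]
    [TopologicalSpace.SeparableSpace C] [TopologicalSpace.MetrizableSpace C]
    (hcont : ∀ g : G, Continuous fun c : C => g • c)
    (hpd : ∀ K L : Set C, IsCompact K → IsCompact L →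
      {g : G | (g • K) ∩ L ≠ ∅}.Finite)
    (hcc : ∃ K : Set C, IsCompact K ∧ ⋃ g : G, g • K = Set.univ)
    (htf : ∀ g : G, g ≠ 1 → ¬ IsOfFinOrder g) :
    ∃ m : MetricSpace C,
      m.toUniformSpace.toTopologicalSpace = tC ∧
      ∀ (g : G) (x y : C), m.dist (g • x) (g • y) = m.dist x y :=
  stmt10_general (tC := tC) hcont hpd hcc
end

section
/- Let Y be a proper, connected, locally connected metric space on which a group G acts by isometries. Then for every y₀ ∈ Y and every D > 0 there exists M > 0 such that for every y in the orbit G • y₀, any two points of the open ball B(y, D) can be joined by a continuous path whose image is contained in the open ball B(y, M). -/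
/-!
Everything is reduced to the base point `y₀`: since `Y` is connected, locally connected and proper,
the compact ball `closedBall y₀ D` lies in a single bounded connected open set `U`, and the isometry
`g` carries paths inside `closure U` to paths near `g • y₀`.

Paths inside `closure U` come from the Mazurkiewicz–Moore argument. Any two points of a connected
open set are joined by chains of small connected open links; such a chain can be refined to any
smaller scale, splitting every link into the same number `m` of sublinks (short subchains are padded
by repeating a point). Refining at scales `2⁻ⁿ`, the step functions `t ↦ pₙ ⌊t Nₙ⌋` change by at
most `2⁻ⁿ` from one level to the next and oscillate by at most `2⁻ⁿ` at scale `1 / Nₙ`, so by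
completeness they converge uniformly to a continuous path.
-/

open Metric Set Filter Topology

section Chains

variable {Y : Type*} [PseudoMetricSpace Y] {W : Set Y} {ε δ : ℝ} {a b d u v : Y}

structure IsChainLink (W : Set Y) (ε : ℝ) (u v : Y) (L : Set Y) : Prop where
  isOpen : IsOpen L
  isPreconnected : IsPreconnected L
  subset : L ⊆ W
  left_mem : u ∈ L
  right_mem : v ∈ L
  subset_ball : L ⊆ ball u ε

theorem IsChainLink.mono {W' L : Set Y} (h : IsChainLink W ε u v L) (hW : W ⊆ W') :
    IsChainLink W' ε u v L :=
  { h with subset := h.subset.trans hW }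

theorem exists_mem_nhds_isChainLink [LocallyConnectedSpace Y] (hW : IsOpen W) (hu : u ∈ W)
    (hε : 0 < ε) : ∃ L ∈ 𝓝 u, ∀ v ∈ L, IsChainLink W ε u v L ∧ IsChainLink W ε v u L := by
  obtain ⟨L, ⟨hLo, huL, hLc⟩, hLsub⟩ := (LocallyConnectedSpace.open_connected_basis u).mem_iff.1
    (inter_mem (hW.mem_nhds hu) (ball_mem_nhds u (half_pos hε)))
  have hLW : L ⊆ W := hLsub.trans inter_subset_left
  have hLball : L ⊆ ball u (ε / 2) := hLsub.trans inter_subset_right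
  refine ⟨L, hLo.mem_nhds huL, fun v hv => ⟨⟨hLo, hLc.isPreconnected, hLW, huL, hv,
    hLball.trans (ball_subset_ball (half_le_self hε.le))⟩, ⟨hLo, hLc.isPreconnected, hLW, hv, huL,
    hLball.trans (ball_subset_ball' ?_)⟩⟩⟩
  linarith [mem_ball'.1 (hLball hv)]

structure LinkChain (W : Set Y) (ε : ℝ) (a b : Y) where
  len : ℕ
  pt : ℕ → Y
  link : ℕ → Set Y
  pt_zero : pt 0 = a
  pt_len : pt len = b
  isChainLink : ∀ i < len, IsChainLink W ε (pt i) (pt (i + 1)) (link i)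

namespace LinkChain

def ofLink {L : Set Y} (h : IsChainLink W ε u v L) : LinkChain W ε u v where
  len := 1
  pt i := if i = 0 then u else v
  link _ := L
  pt_zero := rfl
  pt_len := rfl
  isChainLink i hi := by
    obtain rfl : i = 0 := by omega
    exact h

def replicate {L : Set Y} (h : IsChainLink W ε b b L) (n : ℕ) : LinkChain W ε b b where
  len := n
  pt _ := b
  link _ := L
  pt_zero := rfl
  pt_len := rfl
  isChainLink _ _ := h

def append (c₁ : LinkChain W ε a b) (c₂ : LinkChain W ε b d) : LinkChain W ε a d where
  len := c₁.len + c₂.len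
  pt i := if i < c₁.len then c₁.pt i else c₂.pt (i - c₁.len)
  link i := if i < c₁.len then c₁.link i else c₂.link (i - c₁.len)
  pt_zero := by
    split_ifs with h
    · exact c₁.pt_zero
    · have h₁ := c₁.pt_len
      rw [Nat.eq_zero_of_not_pos h, c₁.pt_zero] at h₁
      rw [Nat.zero_sub, c₂.pt_zero, h₁]
  pt_len := by simp [c₂.pt_len]
  isChainLink i hi := by
    by_cases hi₁ : i < c₁.len
    · rw [if_pos hi₁, if_pos hi₁]
      split_ifs with hi₁'
      · exact c₁.isChainLink i hi₁
      · have h := c₁.isChainLink i hi₁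
        rw [show i + 1 = c₁.len by omega, c₁.pt_len] at h
        rwa [show i + 1 - c₁.len = 0 by omega, c₂.pt_zero]
    · rw [if_neg hi₁, if_neg hi₁, if_neg (by omega), show i + 1 - c₁.len = i - c₁.len + 1 by omega]
      exact c₂.isChainLink _ (by omega)

theorem pt_mem (c : LinkChain W ε a b) (hb : b ∈ W) {i : ℕ} (hi : i ≤ c.len) : c.pt i ∈ W := by
  rcases hi.lt_or_eq with hi | rfl
  · exact (c.isChainLink i hi).subset (c.isChainLink i hi).left_mem
  · rwa [c.pt_len]

theorem dist_pt_lt (c : LinkChain W ε a b) (hε : 0 < ε) {i j : ℕ} (hij : i ≤ j) (hji : j ≤ i + 1)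
    (hj : j ≤ c.len) : dist (c.pt i) (c.pt j) < ε := by
  rcases hij.lt_or_eq with hij | rfl
  · obtain rfl : j = i + 1 := by omega
    have h := c.isChainLink i (by omega)
    exact mem_ball'.1 (h.subset_ball h.right_mem)
  · simpa using hε

end LinkChain

theorem IsPreconnected.nonempty_linkChain [LocallyConnectedSpace Y] (hWc : IsPreconnected W)
    (hWo : IsOpen W) (ha : a ∈ W) (hb : b ∈ W) (hε : 0 < ε) : Nonempty (LinkChain W ε a b) := by
  refine hWc.induction₂' (fun x y => Nonempty (LinkChain W ε x y)) (fun x hx => ?_)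
    (fun x y z _ _ _ ⟨c₁⟩ ⟨c₂⟩ => ⟨c₁.append c₂⟩) ha hb
  obtain ⟨L, hL, hlink⟩ := exists_mem_nhds_isChainLink hWo hx hε
  filter_upwards [mem_nhdsWithin_of_mem_nhds hL] with y hy
  exact ⟨⟨.ofLink (hlink y hy).1⟩, ⟨.ofLink (hlink y hy).2⟩⟩

theorem IsPreconnected.eventually_exists_linkChain_len_eq [LocallyConnectedSpace Y]
    (hWc : IsPreconnected W) (hWo : IsOpen W) (ha : a ∈ W) (hb : b ∈ W) (hε : 0 < ε) :
    ∀ᶠ n in atTop, ∃ c : LinkChain W ε a b, c.len = n := by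
  obtain ⟨c⟩ := hWc.nonempty_linkChain hWo ha hb hε
  obtain ⟨L, hL, hlink⟩ := exists_mem_nhds_isChainLink hWo hb hε
  filter_upwards [eventually_ge_atTop c.len] with n hn
  exact ⟨c.append (.replicate (hlink b (mem_of_mem_nhds hL)).1 (n - c.len)),
    show c.len + (n - c.len) = n by omega⟩

theorem unitInterval.floor_mul_le (t : unitInterval) (n : ℕ) : ⌊(t : ℝ) * n⌋₊ ≤ n :=
  Nat.floor_le_of_le (mul_le_of_le_one_left n.cast_nonneg t.2.2)

-- Multiples of `m` are read off `p`, so the last point `m * N` is `p N` without a block `q N`.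
def blockConcat {Z : Type*} (m : ℕ) (p : ℕ → Z) (q : ℕ → ℕ → Z) (k : ℕ) : Z :=
  if k % m = 0 then p (k / m) else q (k / m) (k % m)

theorem blockConcat_mul_add {Z : Type*} {m i j : ℕ} {p : ℕ → Z} {q : ℕ → ℕ → Z} (hm : 0 < m)
    (hj : j ≤ m) (h₀ : q i 0 = p i) (hₘ : q i m = p (i + 1)) :
    blockConcat m p q (m * i + j) = q i j := by
  rcases hj.lt_or_eq with hj | rfl
  · simp only [blockConcat, Nat.mul_add_mod, Nat.mod_eq_of_lt hj, Nat.mul_add_div hm,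
      Nat.div_eq_of_lt hj, add_zero]
    split_ifs with h
    · rw [h, h₀]
    · rfl
  · simp [blockConcat, ← Nat.mul_succ, Nat.mul_div_cancel_left _ hm, hₘ]

namespace LinkChain

def Refines (c' : LinkChain W δ a b) (c : LinkChain W ε a b) : Prop :=
  ∃ m, 0 < m ∧ c'.len = m * c.len ∧ ∀ k ≤ c'.len, dist (c'.pt k) (c.pt (k / m)) < ε

theorem exists_subchains_len_eq [LocallyConnectedSpace Y] (c : LinkChain W ε a b) (hδ : 0 < δ) :
    ∃ m, 0 < m ∧ ∃ (q : ℕ → ℕ → Y) (R : ℕ → ℕ → Set Y), ∀ i < c.len, q i 0 = c.pt i ∧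
      q i m = c.pt (i + 1) ∧ ∀ j < m, IsChainLink (c.link i) δ (q i j) (q i (j + 1)) (R i j) := by
  have hev : ∀ᶠ m in atTop, ∀ i ∈ Finset.range c.len,
      ∃ d : LinkChain (c.link i) δ (c.pt i) (c.pt (i + 1)), d.len = m :=
    (Finset.range c.len).eventually_all.2 fun i hi =>
      have h := c.isChainLink i (Finset.mem_range.1 hi)
      h.isPreconnected.eventually_exists_linkChain_len_eq h.isOpen h.left_mem h.right_mem hδ
  obtain ⟨m, hm, hd⟩ := ((eventually_gt_atTop 0).and hev).exists
  have : ∀ i, ∃ (q : ℕ → Y) (R : ℕ → Set Y), i < c.len → q 0 = c.pt i ∧ q m = c.pt (i + 1) ∧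
      ∀ j < m, IsChainLink (c.link i) δ (q j) (q (j + 1)) (R j) := fun i => by
    by_cases hi : i < c.len
    · obtain ⟨d, rfl⟩ := hd i (Finset.mem_range.2 hi)
      exact ⟨d.pt, d.link, fun _ => ⟨d.pt_zero, d.pt_len, d.isChainLink⟩⟩
    · exact ⟨fun _ => a, fun _ => ∅, fun h => absurd h hi⟩
  choose q R hq using this
  exact ⟨m, hm, q, R, hq⟩

theorem exists_refines [LocallyConnectedSpace Y] (c : LinkChain W ε a b) (hε : 0 < ε)
    (hδ : 0 < δ) : ∃ c' : LinkChain W δ a b, c'.Refines c := by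
  obtain ⟨m, hm, q, R, hq⟩ := c.exists_subchains_len_eq hδ
  refine ⟨⟨m * c.len, blockConcat m c.pt q, fun k => R (k / m) (k % m), ?_, ?_, ?_⟩,
    m, hm, rfl, ?_⟩
  · simp [blockConcat, c.pt_zero]
  · simp [blockConcat, Nat.mul_div_cancel_left _ hm, c.pt_len]
  · intro k hk
    obtain ⟨i, j, hj, rfl⟩ : ∃ i j, j < m ∧ k = m * i + j :=
      ⟨k / m, k % m, Nat.mod_lt k hm, (Nat.div_add_mod k m).symm⟩
    have hi : i < c.len := by
      by_contra! h
      nlinarith [Nat.mul_le_mul_left m h]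
    obtain ⟨h₀, hₘ, hlink⟩ := hq i hi
    rw [blockConcat_mul_add hm hj.le h₀ hₘ, add_assoc, blockConcat_mul_add hm hj h₀ hₘ,
      Nat.mul_add_div hm, Nat.div_eq_of_lt hj, Nat.mul_add_mod, Nat.mod_eq_of_lt hj, add_zero]
    exact (hlink j hj).mono (c.isChainLink i hi).subset
  · intro k (hk : k ≤ m * c.len)
    change dist (blockConcat m c.pt q k) _ < ε
    unfold blockConcat
    split_ifs with h
    · rwa [dist_self]
    · have hi : k / m < c.len := Nat.div_lt_of_lt_mul <| hk.lt_of_ne fun hkm => h <| by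
        rw [hkm, Nat.mul_mod_right]
      have hlink := (hq _ hi).2.2 _ (Nat.mod_lt k hm)
      exact mem_ball.1 ((c.isChainLink _ hi).subset_ball (hlink.subset hlink.left_mem))

noncomputable def stepFun (c : LinkChain W ε a b) (t : unitInterval) : Y :=
  c.pt ⌊(t : ℝ) * c.len⌋₊

theorem stepFun_zero (c : LinkChain W ε a b) : c.stepFun 0 = a := by
  simp [stepFun, c.pt_zero]

theorem stepFun_one (c : LinkChain W ε a b) : c.stepFun 1 = b := by
  simp [stepFun, c.pt_len]

theorem stepFun_mem (c : LinkChain W ε a b) (hb : b ∈ W) (t : unitInterval) : c.stepFun t ∈ W :=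
  c.pt_mem hb (unitInterval.floor_mul_le t c.len)

theorem dist_stepFun_lt (c : LinkChain W ε a b) (hε : 0 < ε) {s t : unitInterval}
    (hst : dist s t * c.len < 1) : dist (c.stepFun s) (c.stepFun t) < ε := by
  wlog h : (s : ℝ) ≤ t generalizing s t
  · rw [dist_comm]
    exact this (by rwa [dist_comm]) (le_of_not_ge h)
  have hst' : ((t : ℝ) - s) * c.len < 1 := by
    rwa [Subtype.dist_eq, Real.dist_eq, abs_sub_comm, abs_of_nonneg (sub_nonneg.2 h)] at hst
  refine c.dist_pt_lt hε (Nat.floor_le_floor (by gcongr)) ?_ (unitInterval.floor_mul_le t c.len)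
  rw [← Nat.floor_add_one (mul_nonneg s.2.1 c.len.cast_nonneg)]
  exact Nat.floor_le_floor (by linarith)

theorem Refines.dist_stepFun_lt {c' : LinkChain W δ a b} {c : LinkChain W ε a b}
    (h : c'.Refines c) (t : unitInterval) : dist (c'.stepFun t) (c.stepFun t) < ε := by
  obtain ⟨m, hm, hlen, hdist⟩ := h
  have hfloor : ⌊(t : ℝ) * c.len⌋₊ = ⌊(t : ℝ) * c'.len⌋₊ / m := by
    rw [← Nat.floor_div_natCast, hlen, Nat.cast_mul, mul_left_comm, mul_div_cancel_left₀]
    exact_mod_cast hm.ne'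
  rw [stepFun, stepFun, hfloor]
  exact hdist _ (unitInterval.floor_mul_le t c'.len)

end LinkChain

theorem IsPreconnected.exists_seq_linkChain_refines [LocallyConnectedSpace Y]
    (hWc : IsPreconnected W) (hWo : IsOpen W) (ha : a ∈ W) (hb : b ∈ W) :
    ∃ c : ∀ n : ℕ, LinkChain W (1 / 2 ^ n) a b, ∀ n, (c (n + 1)).Refines (c n) := by
  obtain ⟨c₀⟩ := hWc.nonempty_linkChain hWo ha hb (ε := 1 / 2 ^ 0) (by positivity)
  choose next hnext using fun n (c : LinkChain W (1 / 2 ^ n) a b) =>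
    c.exists_refines (δ := 1 / 2 ^ (n + 1)) (by positivity) (by positivity)
  exact ⟨fun n => Nat.rec c₀ next n, fun n => hnext n _⟩

end Chains

theorem exists_uniformContinuous_tendsto_of_dist_succ_le {X Z : Type*} [PseudoMetricSpace X]
    [PseudoMetricSpace Z] [CompleteSpace Z] (f : ℕ → X → Z)
    (hstep : ∀ n x, dist (f n x) (f (n + 1) x) ≤ 1 / 2 ^ n)
    (hosc : ∀ n, ∃ δ > 0, ∀ x y, dist x y < δ → dist (f n x) (f n y) ≤ 1 / 2 ^ n) :
    ∃ g : X → Z, UniformContinuous g ∧ ∀ x, Tendsto (f · x) atTop (𝓝 (g x)) := by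
  have hstep' : ∀ x n, dist (f n x) (f (n + 1) x) ≤ 2 / 2 / 2 ^ n := fun x n => by
    simpa using hstep n x
  choose g hg using fun x =>
    cauchySeq_tendsto_of_complete (cauchySeq_of_le_geometric_two (hstep' x))
  have hclose : ∀ n x, dist (f n x) (g x) ≤ 2 / 2 ^ n := fun n x =>
    dist_le_of_le_geometric_two_of_tendsto (hstep' x) (hg x) n
  refine ⟨g, Metric.uniformContinuous_iff.2 fun ε hε => ?_, hg⟩
  obtain ⟨n, hn⟩ := exists_pow_lt_of_lt_one (div_pos hε (by norm_num : (0 : ℝ) < 5))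
    (by norm_num : (1 / 2 : ℝ) < 1)
  obtain ⟨δ, hδ, hf⟩ := hosc n
  refine ⟨δ, hδ, fun {x y} hxy => ?_⟩
  calc dist (g x) (g y) ≤ dist (f n x) (g x) + dist (f n x) (f n y) + dist (f n y) (g y) := by
        rw [dist_comm (f n x)]; exact dist_triangle4 _ _ _ _
    _ ≤ 2 / 2 ^ n + 1 / 2 ^ n + 2 / 2 ^ n := by
        gcongr
        exacts [hclose n x, hf x y hxy, hclose n y]
    _ = 5 * (1 / 2) ^ n := by rw [one_div_pow]; ring
    _ < ε := by linarith

theorem IsPreconnected.exists_path_range_subset_closure {Y : Type*} [MetricSpace Y]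
    [CompleteSpace Y] [LocallyConnectedSpace Y] {U : Set Y} (hUc : IsPreconnected U)
    (hUo : IsOpen U) {a b : Y} (ha : a ∈ U) (hb : b ∈ U) :
    ∃ γ : Path a b, range γ ⊆ closure U := by
  obtain ⟨c, hc⟩ := hUc.exists_seq_linkChain_refines hUo ha hb
  have hosc : ∀ n, ∃ δ > 0, ∀ s t, dist s t < δ →
      dist ((c n).stepFun s) ((c n).stepFun t) ≤ 1 / 2 ^ n := fun n => by
    refine ⟨1 / ((c n).len + 1), by positivity, fun s t hst => ((c n).dist_stepFun_lt
      (by positivity) ?_).le⟩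
    rw [lt_div_iff₀ (by positivity)] at hst
    nlinarith [dist_nonneg (x := s) (y := t)]
  obtain ⟨g, hgc, hg⟩ := exists_uniformContinuous_tendsto_of_dist_succ_le (fun n => (c n).stepFun)
    (fun n t => by rw [dist_comm]; exact ((hc n).dist_stepFun_lt t).le) hosc
  have hlim : ∀ {t x}, (∀ n, (c n).stepFun t = x) → g t = x := fun h =>
    tendsto_nhds_unique (hg _) (by simp only [h]; exact tendsto_const_nhds)
  refine ⟨⟨⟨g, hgc.continuous⟩, hlim fun n => (c n).stepFun_zero,
    hlim fun n => (c n).stepFun_one⟩, ?_⟩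
  rintro _ ⟨t, rfl⟩
  exact mem_closure_of_tendsto (hg t) (Eventually.of_forall fun n => (c n).stepFun_mem hb t)

section Bounded

variable {Y : Type*} [PseudoMetricSpace Y] [PreconnectedSpace Y] [LocallyConnectedSpace Y]

theorem exists_isOpen_isPreconnected_isBounded_mem (x y : Y) :
    ∃ S : Set Y, IsOpen S ∧ IsPreconnected S ∧ Bornology.IsBounded S ∧ x ∈ S ∧ y ∈ S := by
  refine PreconnectedSpace.induction₂'
    (fun x y => ∃ S : Set Y, IsOpen S ∧ IsPreconnected S ∧ Bornology.IsBounded S ∧ x ∈ S ∧ y ∈ S)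
    (fun x => ?_) ⟨fun x y z ⟨S, hSo, hSc, hSb, hxS, hyS⟩ ⟨T, hTo, hTc, hTb, hyT, hzT⟩ =>
      ⟨S ∪ T, hSo.union hTo, hSc.union y hyS hyT hTc, hSb.union hTb, .inl hxS, .inr hzT⟩⟩ x y
  obtain ⟨S, ⟨hSo, hxS, hSc⟩, hSsub⟩ :=
    (LocallyConnectedSpace.open_connected_basis x).mem_iff.1 (ball_mem_nhds x one_pos)
  have hSb : Bornology.IsBounded S := isBounded_ball.subset hSsub
  filter_upwards [hSo.mem_nhds hxS] with y hy
  exact ⟨⟨S, hSo, hSc.isPreconnected, hSb, hxS, hy⟩, ⟨S, hSo, hSc.isPreconnected, hSb, hy, hxS⟩⟩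

theorem IsCompact.exists_isOpen_isPreconnected_isBounded_superset {K : Set Y} (hK : IsCompact K) :
    ∃ U : Set Y, IsOpen U ∧ IsPreconnected U ∧ Bornology.IsBounded U ∧ K ⊆ U := by
  rcases K.eq_empty_or_nonempty with rfl | ⟨x₀, -⟩
  · exact ⟨∅, isOpen_empty, isPreconnected_empty, Bornology.isBounded_empty, subset_rfl⟩
  choose S hSo hSc hSb hx₀S hS using exists_isOpen_isPreconnected_isBounded_mem x₀
  obtain ⟨t, -, hKt⟩ := hK.elim_nhds_subcover S fun z _ => (hSo z).mem_nhds (hS z)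
  refine ⟨⋃ z ∈ t, S z, isOpen_biUnion fun z _ => hSo z, isPreconnected_of_forall x₀ ?_,
    (Bornology.isBounded_biUnion_finset t).2 fun z _ => hSb z, hKt⟩
  intro y hy
  obtain ⟨z, hz, hyz⟩ := mem_iUnion₂.1 hy
  exact ⟨S z, subset_biUnion_of_mem (u := S) hz, hx₀S z, hyz, hSc z⟩

end Bounded

theorem stmt12_general {G Y : Type*} [Group G] [MetricSpace Y] [ProperSpace Y]
    [ConnectedSpace Y] [LocallyConnectedSpace Y] [MulAction G Y]
    (hiso : ∀ (g : G) (x y : Y), dist (g • x) (g • y) = dist x y)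
    (y₀ : Y) (D : ℝ) :
    ∃ M : ℝ, 0 < M ∧ ∀ y ∈ MulAction.orbit G y₀,
      ∀ a b : Y, a ∈ Metric.ball y D → b ∈ Metric.ball y D →
        ∃ γ : Path a b, Set.range γ ⊆ Metric.ball y M := by
  obtain ⟨U, hUo, hUc, hUb, hDU⟩ :=
    (isCompact_closedBall y₀ D).exists_isOpen_isPreconnected_isBounded_superset
  obtain ⟨M, hM, hUM⟩ := hUb.closure.subset_ball_lt 0 y₀
  refine ⟨M, hM, ?_⟩
  rintro _ ⟨g, rfl⟩ a b ha hb
  have hmem : ∀ x ∈ ball (g • y₀) D, g⁻¹ • x ∈ U := fun x hx =>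
    hDU (ball_subset_closedBall (by rwa [mem_ball, ← hiso g, smul_inv_smul]))
  obtain ⟨γ, hγ⟩ := hUc.exists_path_range_subset_closure hUo (hmem a ha) (hmem b hb)
  refine ⟨(γ.map (Isometry.of_dist_eq (hiso g)).continuous).cast (smul_inv_smul g a).symm
    (smul_inv_smul g b).symm, ?_⟩
  rintro _ ⟨t, rfl⟩
  simpa [hiso] using hUM (hγ ⟨t, rfl⟩)

/-- Corollary 7.3: with a group `G` acting by isometries on a proper,
connected, locally connected metric space `Y`, the constant `M` of Lemma 7.2
can be chosen uniformly over the orbit of `y₀`: any two points of `B(y, D)`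
with `y ∈ G • y₀` can be joined by a path inside `B(y, M)`. -/
theorem stmt12 {G Y : Type*} [Group G] [MetricSpace Y] [ProperSpace Y]
    [ConnectedSpace Y] [LocallyConnectedSpace Y] [MulAction G Y]
    (hiso : ∀ (g : G) (x y : Y), dist (g • x) (g • y) = dist x y)
    (y₀ : Y) (D : ℝ) (hD : 0 < D) :
    ∃ M : ℝ, 0 < M ∧ ∀ y ∈ MulAction.orbit G y₀,
      ∀ a b : Y, a ∈ Metric.ball y D → b ∈ Metric.ball y D →
        ∃ γ : Path a b, Set.range γ ⊆ Metric.ball y M :=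
  stmt12_general hiso y₀ D
end
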